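/- arXiv:1312.3151 — 4 statements merged into one kernel-verified Lean document; each statement's English description precedes it below -/
import Mathlib

section
/- If u_n is Lipschitz with constant K and the infimum defining u_{n+1}(x) = inf_q { u_n(x−hq) + h L(q) } is attained at some q* with |q*| ≤ R, then |u_{n+1}(x) − u_n(x)| ≤ h·(K·R + max{|L(q*)|, |H(0)|}); in particular |u_{n+1}(x) − u_n(x)| ≤ C h with C independent of h. -/
noncomputable section

lemma key_bound {N : ℕ} (h : ℝ) (hh : 0 < h)
    (L u : EuclideanSpace ℝ (Fin N) → ℝ)
    (K : NNReal) (hu : LipschitzWith K u) (R : ℝ)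
    (x qs : EuclideanSpace ℝ (Fin N)) (hqs : ‖qs‖ ≤ R)
    (heq : (⨅ q : EuclideanSpace ℝ (Fin N), (u (x - h • q) + h * L q))
        = u (x - h • qs) + h * L qs) :
    |(⨅ q : EuclideanSpace ℝ (Fin N), (u (x - h • q) + h * L q)) - u x|
      ≤ h * ((K : ℝ) * R + |L qs|) := by
  rw [heq]
  have h1 : |u (x - h • qs) - u x| ≤ (K : ℝ) * (h * R) := by
    have h0 : |u (x - h • qs) - u x| ≤ (K : ℝ) * ‖(x - h • qs) - x‖ := by
      simpa [Real.dist_eq, dist_eq_norm] using hu.dist_le_mul (x - h • qs) x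
    calc |u (x - h • qs) - u x| ≤ (K : ℝ) * ‖(x - h • qs) - x‖ := h0
      _ = (K : ℝ) * (h * ‖qs‖) := by
          rw [sub_sub_cancel_left, norm_neg, norm_smul, Real.norm_eq_abs, abs_of_pos hh]
      _ ≤ (K : ℝ) * (h * R) := by
          have := K.coe_nonneg; gcongr
  have h2 : |h * L qs| = h * |L qs| := by rw [abs_mul, abs_of_pos hh]
  calc |u (x - h • qs) + h * L qs - u x|
      = |(u (x - h • qs) - u x) + h * L qs| := by ring_nf
    _ ≤ |u (x - h • qs) - u x| + |h * L qs| := abs_add_le _ _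
    _ ≤ (K : ℝ) * (h * R) + h * |L qs| := by rw [h2] at *; exact add_le_add h1 le_rfl
    _ = h * ((K : ℝ) * R + |L qs|) := by ring

lemma bdd_below_aux {N : ℕ} (h : ℝ) (hh : 0 < h)
    (L u : EuclideanSpace ℝ (Fin N) → ℝ)
    (hLsl : ∀ c : ℝ, ∃ R : ℝ, ∀ q, R ≤ ‖q‖ → c * ‖q‖ ≤ L q)
    (K : NNReal) (hu : LipschitzWith K u)
    (lI : ℝ) (hlI : lI ∈ lowerBounds (Set.range L))
    (x : EuclideanSpace ℝ (Fin N)) :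
    BddBelow (Set.range (fun q : EuclideanSpace ℝ (Fin N) => u (x - h • q) + h * L q)) := by
  obtain ⟨Rc, hRc⟩ := hLsl ((K : ℝ) + 1)
  refine ⟨min (u x) (u x - (K : ℝ) * h * Rc + h * lI), ?_⟩
  rintro _ ⟨q, rfl⟩
  have hK : (0:ℝ) ≤ K := K.coe_nonneg
  have hlip : u x - (K : ℝ) * (h * ‖q‖) ≤ u (x - h • q) := by
    have h0 : |u (x - h • q) - u x| ≤ (K : ℝ) * ‖(x - h • q) - x‖ := by
      simpa [Real.dist_eq, dist_eq_norm] using hu.dist_le_mul (x - h • q) x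
    rw [sub_sub_cancel_left, norm_neg, norm_smul, Real.norm_eq_abs, abs_of_pos hh] at h0
    have := (abs_le.mp h0).1
    linarith
  by_cases hq : Rc ≤ ‖q‖
  · have hL : ((K : ℝ) + 1) * ‖q‖ ≤ L q := hRc q hq
    have : u x ≤ u (x - h • q) + h * L q := by nlinarith [norm_nonneg q, hh.le]
    exact le_trans (min_le_left _ _) this
  · push_neg at hq
    have hLq : lI ≤ L q := hlI ⟨q, rfl⟩
    have : u x - (K : ℝ) * h * Rc + h * lI ≤ u (x - h • q) + h * L q := by
      have e1 : (K : ℝ) * h * ‖q‖ ≤ (K : ℝ) * h * Rc :=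
        mul_le_mul_of_nonneg_left hq.le (mul_nonneg hK hh.le)
      have e2 : h * lI ≤ h * L q := mul_le_mul_of_nonneg_left hLq hh.le
      nlinarith
    exact le_trans (min_le_right _ _) this

/-- If `u_n` is `K`-Lipschitz and the infimum defining
`u_{n+1}(x) = inf_q { u_n(x - hq) + h L(q) }` is attained at some `q*` with `‖q*‖ ≤ R`,
then `|u_{n+1}(x) - u_n(x)| ≤ h (K R + max{|L(q*)|, |H(0)|})` with `H(0) = -inf L`;
in particular `|u_{n+1}(x) - u_n(x)| ≤ C h` with `C` independent of `h`. -/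
theorem one_step_time_increment {N : ℕ} (h : ℝ) (hh : 0 < h)
    (L u : EuclideanSpace ℝ (Fin N) → ℝ)
    (hLconv : ConvexOn ℝ Set.univ L)
    (hLsl : ∀ c : ℝ, ∃ R : ℝ, ∀ q, R ≤ ‖q‖ → c * ‖q‖ ≤ L q)
    (K : NNReal) (hu : LipschitzWith K u)
    (lI : ℝ) (hlI : IsGLB (Set.range L) lI) (R : ℝ) :
    (∀ (x qs : EuclideanSpace ℝ (Fin N)), ‖qs‖ ≤ R →
      (⨅ q : EuclideanSpace ℝ (Fin N), (u (x - h • q) + h * L q))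
        = u (x - h • qs) + h * L qs →
      |(⨅ q : EuclideanSpace ℝ (Fin N), (u (x - h • q) + h * L q)) - u x|
        ≤ h * ((K : ℝ) * R + max |L qs| |(-lI)|)) ∧
    ((∀ x : EuclideanSpace ℝ (Fin N), ∃ qs : EuclideanSpace ℝ (Fin N), ‖qs‖ ≤ R ∧
        (⨅ q : EuclideanSpace ℝ (Fin N), (u (x - h • q) + h * L q))
          = u (x - h • qs) + h * L qs) →
      ∃ C : ℝ, 0 ≤ C ∧ ∀ x : EuclideanSpace ℝ (Fin N),
        |(⨅ q : EuclideanSpace ℝ (Fin N), (u (x - h • q) + h * L q)) - u x| ≤ C * h) := by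
  have hK : (0:ℝ) ≤ K := K.coe_nonneg
  constructor
  · intro x qs hqs heq
    refine le_trans (key_bound h hh L u K hu R x qs hqs heq) ?_
    gcongr
    exact le_max_left _ _
  · intro hex
    have hR : 0 ≤ R := by
      obtain ⟨qs, hqs, -⟩ := hex 0
      exact le_trans (norm_nonneg _) hqs
    set M : ℝ := max ((K : ℝ) * R + |L 0|) |lI| with hM
    refine ⟨(K : ℝ) * R + M, by positivity, fun x => ?_⟩
    obtain ⟨qs, hqs, heq⟩ := hex x
    have hLqsM : |L qs| ≤ M := by
      have hbdd := bdd_below_aux h hh L u hLsl K hu lI hlI.1 x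
      have hle : (⨅ q : EuclideanSpace ℝ (Fin N), (u (x - h • q) + h * L q))
          ≤ u (x - h • (0 : EuclideanSpace ℝ (Fin N))) + h * L 0 := ciInf_le hbdd 0
      rw [heq, smul_zero, sub_zero] at hle
      have hlip : u x - (K : ℝ) * (h * R) ≤ u (x - h • qs) := by
        have h0 : |u (x - h • qs) - u x| ≤ (K : ℝ) * ‖(x - h • qs) - x‖ := by
          simpa [Real.dist_eq, dist_eq_norm] using hu.dist_le_mul (x - h • qs) x
        rw [sub_sub_cancel_left, norm_neg, norm_smul, Real.norm_eq_abs, abs_of_pos hh] at h0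
        have h1 := (abs_le.mp h0).1
        have h2 : (K : ℝ) * (h * ‖qs‖) ≤ (K : ℝ) * (h * R) := by gcongr
        linarith
      have hup : L qs ≤ (K : ℝ) * R + L 0 := by nlinarith
      have hlo : lI ≤ L qs := hlI.1 ⟨qs, rfl⟩
      rw [abs_le]
      constructor
      · have : -|lI| ≤ lI := neg_abs_le lI
        have : |lI| ≤ M := le_max_right _ _
        nlinarith [neg_abs_le lI]
      · have : (K : ℝ) * R + L 0 ≤ (K : ℝ) * R + |L 0| := by gcongr; exact le_abs_self _
        have : (K : ℝ) * R + |L 0| ≤ M := le_max_left _ _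
        nlinarith [le_abs_self (L 0), le_max_left ((K : ℝ) * R + |L 0|) |lI|]
    have := key_bound h hh L u K hu R x qs hqs heq
    calc |(⨅ q : EuclideanSpace ℝ (Fin N), (u (x - h • q) + h * L q)) - u x|
        ≤ h * ((K : ℝ) * R + |L qs|) := this
      _ ≤ h * ((K : ℝ) * R + M) := by gcongr
      _ = ((K : ℝ) * R + M) * h := by ring
end
end

section
/- Prékopa–Leindler inequality: let a, b > 0 with a + b = 1 and u, v, w nonnegative measurable functions on ℝ^N such that u(x)^a v(y)^b ≤ w(ax + by) for all x, y. Then (∫u)^a (∫v)^b ≤ ∫w. -/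
open MeasureTheory Set
open scoped ENNReal Pointwise

/-!
On the line, rescale `u` (and `w`) so that `sup u = sup v`. Then for every level `s` the superlevel
sets `{u > s}` and `{v > s}` are both empty or both nonempty, and `a • {u > s} + b • {v > s}` lies
in `{w > s}`, so the one-dimensional Brunn–Minkowski inequality `|A| + |B| ≤ |A + B|` gives
`a |{u > s}| + b |{v > s}| ≤ |{w > s}|`. Integrating over `s` yields `a ∫u + b ∫v ≤ ∫w`, which
dominates `(∫u)^a (∫v)^b` by the weighted AM–GM inequality; truncation and monotone convergence
remove the boundedness needed for the rescaling. The inequality passes to products by Fubini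
(apply it in the fibres, then to the fibre integrals), hence to `ℝ^N` by induction.
-/

theorem ENNReal.rpow_mul_rpow_le_add {a b : ℝ} (ha : 0 < a) (hb : 0 < b) (hab : a + b = 1)
    (x y : ℝ≥0∞) : x ^ a * y ^ b ≤ ENNReal.ofReal a * x + ENNReal.ofReal b * y := by
  have key := ENNReal.young_inequality (x ^ a) (y ^ b) (Real.HolderConjugate.inv_inv ha hb hab)
  rwa [ENNReal.rpow_rpow_inv ha.ne', ENNReal.rpow_rpow_inv hb.ne', ENNReal.ofReal_inv_of_pos ha,
    ENNReal.ofReal_inv_of_pos hb, div_eq_mul_inv, div_eq_mul_inv, inv_inv, inv_inv,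
    mul_comm x, mul_comm y] at key

theorem ENNReal.iSup_rpow {ι : Sort*} (f : ι → ℝ≥0∞) {p : ℝ} (hp : 0 < p) :
    (⨆ i, f i) ^ p = ⨆ i, f i ^ p :=
  (orderIsoRpow p hp).map_iSup f

theorem ENNReal.lt_rpow_mul_rpow {a b : ℝ} (ha : 0 < a) (hb : 0 < b) (hab : a + b = 1)
    {s x y : ℝ≥0∞} (hx : s < x) (hy : s < y) : s < x ^ a * y ^ b :=
  calc s = s ^ a * s ^ b := by rw [← ENNReal.rpow_add_of_nonneg _ _ ha.le hb.le, hab, rpow_one]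
    _ < x ^ a * y ^ b := ENNReal.mul_lt_mul (rpow_lt_rpow hx ha) (rpow_lt_rpow hy hb)

theorem Real.volume_setOf_ofReal_lt_inter_Ioi (c : ℝ≥0∞) :
    volume ({t : ℝ | ENNReal.ofReal t < c} ∩ Ioi 0) = c := by
  rcases eq_or_ne c ⊤ with rfl | hc
  · simp
  · have : {t : ℝ | ENNReal.ofReal t < c} ∩ Ioi 0 = Ioo 0 c.toReal := by
      ext t
      simp only [mem_inter_iff, mem_ofPred_eq, mem_Ioi, mem_Ioo]
      exact ⟨fun ⟨h, ht⟩ => ⟨ht, (ENNReal.ofReal_lt_iff_lt_toReal ht.le hc).mp h⟩,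
        fun ⟨ht, h⟩ => ⟨(ENNReal.ofReal_lt_iff_lt_toReal ht.le hc).mpr h, ht⟩⟩
    rw [this, Real.volume_Ioo, sub_zero, ENNReal.ofReal_toReal hc]

theorem MeasureTheory.lintegral_eq_lintegral_meas_ofReal_lt {α : Type*} [MeasurableSpace α]
    (μ : Measure α) [SFinite μ] {f : α → ℝ≥0∞} (hf : Measurable f) :
    ∫⁻ x, f x ∂μ = ∫⁻ t in Ioi 0, μ {x | ENNReal.ofReal t < f x} := by
  -- both sides are the measure of the region under the graph of `f`
  have hS : MeasurableSet {p : α × ℝ | ENNReal.ofReal p.2 < f p.1} :=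
    measurableSet_lt (ENNReal.measurable_ofReal.comp measurable_snd) (hf.comp measurable_fst)
  calc ∫⁻ x, f x ∂μ = ∫⁻ x, volume.restrict (Ioi 0) {t | ENNReal.ofReal t < f x} ∂μ := by
        refine lintegral_congr fun x => ?_
        rw [Measure.restrict_apply (measurableSet_lt ENNReal.measurable_ofReal measurable_const),
          Real.volume_setOf_ofReal_lt_inter_Ioi]
    _ = μ.prod (volume.restrict (Ioi 0)) {p | ENNReal.ofReal p.2 < f p.1} :=
        (Measure.prod_apply hS).symm
    _ = ∫⁻ t in Ioi 0, μ {x | ENNReal.ofReal t < f x} := Measure.prod_apply_symm hS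

theorem MeasureTheory.lintegral_eq_iSup_lintegral_min_natCast {α : Type*} [MeasurableSpace α]
    (μ : Measure α) {f : α → ℝ≥0∞} (hf : Measurable f) :
    ∫⁻ x, f x ∂μ = ⨆ n : ℕ, ∫⁻ x, f x ⊓ n ∂μ := by
  rw [← lintegral_iSup (fun n => hf.min measurable_const)
    fun i j hij x => inf_le_inf_left _ (Nat.mono_cast hij)]
  simp [← inf_iSup_eq, ENNReal.iSup_natCast]

theorem Real.volume_add_volume_le_volume_add_of_isCompact {K L : Set ℝ} (hK : IsCompact K)
    (hL : IsCompact L) (hK₀ : K.Nonempty) (hL₀ : L.Nonempty) :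
    volume K + volume L ≤ volume (K + L) := by
  obtain ⟨k, hk, hk_max⟩ := hK.exists_isGreatest hK₀
  obtain ⟨l, hl, hl_min⟩ := hL.exists_isLeast hL₀
  -- `K + min L` and `max K + L` are translates of `K` and `L` inside `K + L` meeting in one point
  have hcap : (K + {l}) ∩ ({k} + L) ⊆ {k + l} := by
    rintro _ ⟨⟨x, hx, _, rfl, rfl⟩, ⟨_, rfl, y, hy, hxy⟩⟩
    exact mem_singleton_iff.mpr (by linarith [hk_max hx, hl_min hy])
  calc volume K + volume L = volume (K + {l}) + volume ({k} + L) := by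
        rw [add_singleton, singleton_add, image_add_right, image_add_left,
          measure_preimage_add_right, measure_preimage_add]
    _ = volume ((K + {l}) ∪ ({k} + L)) + volume ((K + {l}) ∩ ({k} + L)) :=
        (measure_union_add_inter _ (isCompact_singleton.add hL).measurableSet).symm
    _ ≤ volume (K + L) + volume ({k + l} : Set ℝ) := by
        gcongr
        exact union_subset (add_subset_add_left (singleton_subset_iff.mpr hl))
          (add_subset_add_right (singleton_subset_iff.mpr hk))
    _ = volume (K + L) := by rw [Real.volume_singleton, add_zero]

theorem Real.volume_add_volume_le_volume_add {A B : Set ℝ} (hA : MeasurableSet A)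
    (hB : MeasurableSet B) (hA₀ : A.Nonempty) (hB₀ : B.Nonempty) :
    volume A + volume B ≤ volume (A + B) := by
  obtain ⟨x, hx⟩ := hA₀
  obtain ⟨y, hy⟩ := hB₀
  rw [hA.measure_eq_iSup_isCompact, hB.measure_eq_iSup_isCompact]
  simp_rw [iSup_and']
  refine ENNReal.biSup_add_biSup_le' ⟨∅, empty_subset _, isCompact_empty⟩
    ⟨∅, empty_subset _, isCompact_empty⟩ fun K ⟨hKA, hK⟩ L ⟨hLB, hL⟩ => ?_
  -- adding a point makes both compact sets nonempty
  calc volume K + volume L ≤ volume (insert x K) + volume (insert y L) := by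
        gcongr <;> exact subset_insert _ _
    _ ≤ volume (insert x K + insert y L) :=
        Real.volume_add_volume_le_volume_add_of_isCompact (hK.insert x) (hL.insert y)
          (insert_nonempty x K) (insert_nonempty y L)
    _ ≤ volume (A + B) := by
        gcongr
        exacts [insert_subset hx hKA, insert_subset hy hLB]

theorem Real.ofReal_mul_volume_add_ofReal_mul_volume_le {a b : ℝ} (ha : 0 ≤ a) (hb : 0 ≤ b)
    {A B : Set ℝ} (hA : MeasurableSet A) (hB : MeasurableSet B) (hA₀ : A.Nonempty)
    (hB₀ : B.Nonempty) :
    ENNReal.ofReal a * volume A + ENNReal.ofReal b * volume B ≤ volume (a • A + b • B) := by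
  simpa [abs_of_nonneg, ha, hb] using
    Real.volume_add_volume_le_volume_add (hA.const_smul₀ a) (hB.const_smul₀ b)
      (hA₀.smul_set) (hB₀.smul_set)

theorem ofReal_mul_meas_lt_add_le_meas_lt {a b : ℝ} (ha : 0 < a) (hb : 0 < b) (hab : a + b = 1)
    {u v w : ℝ → ℝ≥0∞} (hu : Measurable u) (hv : Measurable v) (hsup : ⨆ x, u x = ⨆ x, v x)
    (huvw : ∀ x y, u x ^ a * v y ^ b ≤ w (a * x + b * y)) (s : ℝ≥0∞) :
    ENNReal.ofReal a * volume {x | s < u x} + ENNReal.ofReal b * volume {x | s < v x}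
      ≤ volume {x | s < w x} := by
  by_cases hs : s < ⨆ x, u x
  · have hu₀ : {x | s < u x}.Nonempty := lt_iSup_iff.mp hs
    have hv₀ : {x | s < v x}.Nonempty := lt_iSup_iff.mp (hsup ▸ hs :)
    calc _ ≤ volume (a • {x | s < u x} + b • {x | s < v x}) :=
          Real.ofReal_mul_volume_add_ofReal_mul_volume_le ha.le hb.le
            (measurableSet_lt measurable_const hu) (measurableSet_lt measurable_const hv) hu₀ hv₀
      _ ≤ volume {x | s < w x} := by
          gcongr
          rintro _ ⟨_, ⟨x, hx, rfl⟩, _, ⟨y, hy, rfl⟩, rfl⟩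
          exact (ENNReal.lt_rpow_mul_rpow ha hb hab hx hy).trans_le (huvw x y)
  · rw [not_lt] at hs
    have hu_empty : {x | s < u x} = ∅ :=
      eq_empty_of_forall_notMem fun x hx => (le_iSup u x |>.trans hs).not_gt hx
    have hv_empty : {x | s < v x} = ∅ :=
      eq_empty_of_forall_notMem fun x hx => (le_iSup v x |>.trans (hsup ▸ hs)).not_gt hx
    simp [hu_empty, hv_empty]

theorem ofReal_mul_lintegral_add_le_lintegral_of_iSup_eq {a b : ℝ} (ha : 0 < a) (hb : 0 < b)
    (hab : a + b = 1) {u v w : ℝ → ℝ≥0∞} (hu : Measurable u) (hv : Measurable v)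
    (hw : Measurable w) (hsup : ⨆ x, u x = ⨆ x, v x)
    (huvw : ∀ x y, u x ^ a * v y ^ b ≤ w (a * x + b * y)) :
    ENNReal.ofReal a * (∫⁻ x, u x) + ENNReal.ofReal b * ∫⁻ x, v x ≤ ∫⁻ x, w x := by
  simp only [lintegral_eq_lintegral_meas_ofReal_lt volume hu,
    lintegral_eq_lintegral_meas_ofReal_lt volume hv, lintegral_eq_lintegral_meas_ofReal_lt volume hw,
    ← lintegral_const_mul' _ _ ENNReal.ofReal_ne_top]
  exact le_lintegral_add _ _ |>.trans <| lintegral_mono fun t =>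
    ofReal_mul_meas_lt_add_le_meas_lt ha hb hab hu hv hsup huvw _

theorem lintegral_rpow_mul_lintegral_rpow_le_of_iSup_ne_top {a b : ℝ} (ha : 0 < a) (hb : 0 < b)
    (hab : a + b = 1) {u v w : ℝ → ℝ≥0∞} (hu : Measurable u) (hv : Measurable v)
    (hw : Measurable w) (hu_top : ⨆ x, u x ≠ ⊤) (hv_top : ⨆ x, v x ≠ ⊤)
    (huvw : ∀ x y, u x ^ a * v y ^ b ≤ w (a * x + b * y)) :
    (∫⁻ x, u x) ^ a * (∫⁻ x, v x) ^ b ≤ ∫⁻ x, w x := by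
  rcases eq_or_ne (⨆ x, u x) 0 with hu₀ | hu₀
  · simp [ENNReal.iSup_eq_zero.mp hu₀, ENNReal.zero_rpow_of_pos ha]
  rcases eq_or_ne (⨆ x, v x) 0 with hv₀ | hv₀
  · simp [ENNReal.iSup_eq_zero.mp hv₀, ENNReal.zero_rpow_of_pos hb]
  -- rescale `u` (and `w`) so that `u` and `v` have the same supremum
  set c := (⨆ x, v x) / ⨆ x, u x
  have hc₀ : c ≠ 0 := ENNReal.div_ne_zero.mpr ⟨hv₀, hu_top⟩
  have hc_top : c ≠ ⊤ := ENNReal.div_ne_top hv_top hu₀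
  have hca₀ : c ^ a ≠ 0 := by positivity
  have hca_top : c ^ a ≠ ⊤ := ENNReal.rpow_ne_top_of_nonneg ha.le hc_top
  have key := ofReal_mul_lintegral_add_le_lintegral_of_iSup_eq ha hb hab
    (hu.const_mul c) hv (hw.const_mul (c ^ a))
    (by rw [← ENNReal.mul_iSup, ENNReal.div_mul_cancel hu₀ hu_top])
    (fun x y => by
      rw [ENNReal.mul_rpow_of_nonneg _ _ ha.le, mul_assoc]
      gcongr
      exact huvw x y)
  rw [← ENNReal.mul_le_mul_iff_right hca₀ hca_top]
  calc c ^ a * ((∫⁻ x, u x) ^ a * (∫⁻ x, v x) ^ b)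
      = (∫⁻ x, c * u x) ^ a * (∫⁻ x, v x) ^ b := by
        rw [lintegral_const_mul _ hu, ENNReal.mul_rpow_of_nonneg _ _ ha.le, mul_assoc]
    _ ≤ ENNReal.ofReal a * (∫⁻ x, c * u x) + ENNReal.ofReal b * ∫⁻ x, v x :=
        ENNReal.rpow_mul_rpow_le_add ha hb hab _ _
    _ ≤ ∫⁻ x, c ^ a * w x := key
    _ = c ^ a * ∫⁻ x, w x := lintegral_const_mul _ hw

/-- Stated for `ℝ≥0∞`-valued functions so that it applies to fibre integrals, which may be
infinite. -/
def HasPrekopaLeindler (a b : ℝ) (α : Type*) [MeasureSpace α] [SMul ℝ α] [Add α] : Prop :=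
  ∀ u v w : α → ℝ≥0∞, Measurable u → Measurable v → Measurable w →
    (∀ x y, u x ^ a * v y ^ b ≤ w (a • x + b • y)) →
    (∫⁻ x, u x) ^ a * (∫⁻ x, v x) ^ b ≤ ∫⁻ x, w x

namespace HasPrekopaLeindler

variable {a b : ℝ} {α β : Type*} [MeasureSpace α] [MeasureSpace β] [SMul ℝ α] [Add α]
  [SMul ℝ β] [Add β]

theorem of_measurePreserving (e : β ≃ᵐ α) (he : MeasurePreserving e volume volume)
    (he_lin : ∀ x y, e (a • x + b • y) = a • e x + b • e y) (h : HasPrekopaLeindler a b α) :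
    HasPrekopaLeindler a b β := by
  intro u v w hu hv hw huvw
  have he_symm := he.symm e
  have he_symm_lin : ∀ x y, e.symm (a • x + b • y) = a • e.symm x + b • e.symm y := fun x y =>
    e.injective (by simp [he_lin])
  simp only [← he_symm.lintegral_comp_emb e.symm.measurableEmbedding]
  exact h _ _ _ (hu.comp e.symm.measurable) (hv.comp e.symm.measurable)
    (hw.comp e.symm.measurable) fun x y => he_symm_lin x y ▸ huvw (e.symm x) (e.symm y)

theorem prod [SFinite (volume : Measure α)] [SFinite (volume : Measure β)]
    (hα : HasPrekopaLeindler a b α) (hβ : HasPrekopaLeindler a b β) :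
    HasPrekopaLeindler a b (α × β) := by
  intro u v w hu hv hw huvw
  simp only [Measure.volume_eq_prod, lintegral_prod_symm' _ hu, lintegral_prod_symm' _ hv,
    lintegral_prod_symm' _ hw]
  exact hβ _ _ _ hu.lintegral_prod_left' hv.lintegral_prod_left' hw.lintegral_prod_left'
    fun y₁ y₂ => hα _ _ _ (hu.comp measurable_prodMk_right) (hv.comp measurable_prodMk_right)
      (hw.comp measurable_prodMk_right) fun x₁ x₂ => huvw (x₁, y₁) (x₂, y₂)

end HasPrekopaLeindler

theorem hasPrekopaLeindler_real {a b : ℝ} (ha : 0 < a) (hb : 0 < b) (hab : a + b = 1) :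
    HasPrekopaLeindler a b ℝ := by
  intro u v w hu hv hw huvw
  have htrunc : ∀ n m : ℕ, (∫⁻ x, u x ⊓ n) ^ a * (∫⁻ x, v x ⊓ m) ^ b ≤ ∫⁻ x, w x := fun n m =>
    lintegral_rpow_mul_lintegral_rpow_le_of_iSup_ne_top ha hb hab (hu.min measurable_const)
      (hv.min measurable_const) hw
      (ne_top_of_le_ne_top (ENNReal.natCast_ne_top n) (iSup_le fun _ => inf_le_right))
      (ne_top_of_le_ne_top (ENNReal.natCast_ne_top m) (iSup_le fun _ => inf_le_right))
      fun x y => le_trans (by gcongr <;> exact inf_le_left) (huvw x y)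
  rw [lintegral_eq_iSup_lintegral_min_natCast volume hu,
    lintegral_eq_iSup_lintegral_min_natCast volume hv, ENNReal.iSup_rpow _ ha,
    ENNReal.iSup_rpow _ hb, ENNReal.iSup_mul]
  exact iSup_le fun n => by rw [ENNReal.mul_iSup]; exact iSup_le (htrunc n)

theorem hasPrekopaLeindler_pi {a b : ℝ} (ha : 0 < a) (hb : 0 < b) (hab : a + b = 1) (N : ℕ) :
    HasPrekopaLeindler a b (Fin N → ℝ) := by
  induction N with
  | zero =>
    intro u v w _ _ _ huvw
    rw [volume_pi, Measure.pi_of_empty, lintegral_dirac, lintegral_dirac, lintegral_dirac]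
    convert huvw isEmptyElim isEmptyElim
  | succ n ih =>
    exact (hasPrekopaLeindler_real ha hb hab).prod ih |>.of_measurePreserving
      (MeasurableEquiv.piFinSuccAbove (fun _ => ℝ) 0)
      (volume_preserving_piFinSuccAbove (fun _ => ℝ) 0) fun _ _ => rfl

theorem prekopa_leindler_general {N : ℕ} (a b : ℝ) (ha : 0 < a) (hb : 0 < b) (hab : a + b = 1)
    (u v w : EuclideanSpace ℝ (Fin N) → ℝ)
    (hu0 : ∀ x, 0 ≤ u x) (hv0 : ∀ x, 0 ≤ v x)
    (hu : Measurable u) (hv : Measurable v) (hw : Measurable w)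
    (hyp : ∀ x y : EuclideanSpace ℝ (Fin N), u x ^ a * v y ^ b ≤ w (a • x + b • y)) :
    (∫⁻ x, ENNReal.ofReal (u x)) ^ a * (∫⁻ x, ENNReal.ofReal (v x)) ^ b
      ≤ ∫⁻ x, ENNReal.ofReal (w x) := by
  have hE : HasPrekopaLeindler a b (EuclideanSpace ℝ (Fin N)) :=
    (hasPrekopaLeindler_pi ha hb hab N).of_measurePreserving
      (MeasurableEquiv.toLp 2 (Fin N → ℝ)).symm
      (EuclideanSpace.volume_preserving_symm_measurableEquiv_toLp (Fin N)) fun _ _ => rfl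
  refine hE _ _ _ (ENNReal.measurable_ofReal.comp hu) (ENNReal.measurable_ofReal.comp hv)
    (ENNReal.measurable_ofReal.comp hw) fun x y => ?_
  rw [ENNReal.ofReal_rpow_of_nonneg (hu0 x) ha.le, ENNReal.ofReal_rpow_of_nonneg (hv0 y) hb.le,
    ← ENNReal.ofReal_mul (Real.rpow_nonneg (hu0 x) a)]
  exact ENNReal.ofReal_le_ofReal (hyp x y)

/-- Prékopa–Leindler inequality: if `a, b > 0`, `a + b = 1` and the nonnegative measurable
functions `u, v, w` on `ℝ^N` satisfy `u(x)^a v(y)^b ≤ w(ax + by)` for all `x, y`, then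
`(∫u)^a (∫v)^b ≤ ∫w` (integrals with respect to Lebesgue measure). -/
theorem prekopa_leindler {N : ℕ} (a b : ℝ) (ha : 0 < a) (hb : 0 < b) (hab : a + b = 1)
    (u v w : EuclideanSpace ℝ (Fin N) → ℝ)
    (hu0 : ∀ x, 0 ≤ u x) (hv0 : ∀ x, 0 ≤ v x) (hw0 : ∀ x, 0 ≤ w x)
    (hu : Measurable u) (hv : Measurable v) (hw : Measurable w)
    (hyp : ∀ x y : EuclideanSpace ℝ (Fin N), u x ^ a * v y ^ b ≤ w (a • x + b • y)) :
    (∫⁻ x, ENNReal.ofReal (u x)) ^ a * (∫⁻ x, ENNReal.ofReal (v x)) ^ b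
      ≤ ∫⁻ x, ENNReal.ofReal (w x) :=
  prekopa_leindler_general a b ha hb hab u v w hu0 hv0 hu hv hw hyp
end

section
/- Pointwise Prékopa–Leindler hypothesis for the discrete Hopf–Lax semigroup: with a = α/β, b = (β−α)/β, θ = β(β−α)/(αnh), u(x) = e^{βQ_n f(x)}, v(y) = e^{−θ|y|²/2}, w(z) = e^{αf(βz/α)}, one has u(x)^a v(y)^b ≤ w(ax + by) for all x, y ∈ ℝ^N. -/
/-! Testing the infimum defining `Q_n f(x)` with the constant control `q_k = v / (n h)`, which moves
`x` to `x - v` at cost `|v|² / (2 n h)`, bounds `Q_n f` by the Hopf–Lax infimum at time `n h`.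
With `v = -((β - α)/α) y` the point `x - v` is `(β/α)(a x + b y)`, and the cost, multiplied by `α`,
is exactly the Gaussian exponent `θ b |y|²/2`; so after taking logarithms the claim is `α`
times that bound. -/

open scoped BigOperators

noncomputable section

/-- Semi-Lagrangian discrete semigroup for `L(q) = |q|²/2`. -/
def Q {N : ℕ} (h : ℝ) (f : EuclideanSpace ℝ (Fin N) → ℝ) (n : ℕ)
    (x : EuclideanSpace ℝ (Fin N)) : ℝ :=
  ⨅ q : Fin n → EuclideanSpace ℝ (Fin N),
    (f (x - h • ∑ k, q k) + h * ∑ k, ‖q k‖ ^ 2 / 2)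

theorem Q_le_add_norm_sq_div {N : ℕ} {h : ℝ} (hh : 0 < h) {n : ℕ} (hn : n ≠ 0)
    {f : EuclideanSpace ℝ (Fin N) → ℝ} {x : EuclideanSpace ℝ (Fin N)}
    (hbd : BddBelow (Set.range fun q : Fin n → EuclideanSpace ℝ (Fin N) =>
      f (x - h • ∑ k, q k) + h * ∑ k, ‖q k‖ ^ 2 / 2))
    (v : EuclideanSpace ℝ (Fin N)) :
    Q h f n x ≤ f (x - v) + ‖v‖ ^ 2 / (2 * (n * h)) := by
  have hnh : (n : ℝ) * h ≠ 0 := mul_ne_zero (Nat.cast_ne_zero.mpr hn) hh.ne'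
  have hdisp : h • ∑ _k : Fin n, ((n : ℝ) * h)⁻¹ • v = v := by
    rw [Finset.sum_const, Finset.card_univ, Fintype.card_fin, ← Nat.cast_smul_eq_nsmul ℝ,
      smul_smul, smul_smul, mul_comm h, mul_inv_cancel₀ hnh, one_smul]
  have hcost : h * ∑ _k : Fin n, ‖((n : ℝ) * h)⁻¹ • v‖ ^ 2 / 2 = ‖v‖ ^ 2 / (2 * (n * h)) := by
    rw [Finset.sum_const, Finset.card_univ, Fintype.card_fin, nsmul_eq_mul, norm_smul,
      norm_inv, Real.norm_of_nonneg (by positivity)]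
    field_simp
  simpa only [Q, hdisp, hcost] using ciInf_le hbd fun _ => ((n : ℝ) * h)⁻¹ • v

/-- Pointwise Prékopa–Leindler hypothesis for the discrete Hopf–Lax semigroup:
with `a = α/β`, `b = (β-α)/β`, `θ = β(β-α)/(α n h)`, `u(x) = e^{β Q_n f(x)}`,
`v(y) = e^{-θ|y|²/2}`, `w(z) = e^{α f(β z/α)}`, one has `u(x)^a v(y)^b ≤ w(ax + by)`. -/
theorem pointwise_PL_hypothesis {N : ℕ} (h : ℝ) (hh : 0 < h)
    (f : EuclideanSpace ℝ (Fin N) → ℝ)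
    (α β : ℝ) (hα : 0 < α) (hαβ : α ≤ β) (n : ℕ) (hn : 1 ≤ n)
    (hbd : ∀ x : EuclideanSpace ℝ (Fin N),
      BddBelow (Set.range fun q : Fin n → EuclideanSpace ℝ (Fin N) =>
        f (x - h • ∑ k, q k) + h * ∑ k, ‖q k‖ ^ 2 / 2)) :
    ∀ x y : EuclideanSpace ℝ (Fin N),
      Real.exp (β * Q h f n x) ^ (α / β) *
        Real.exp (-(β * (β - α) / (α * ((n : ℝ) * h))) * ‖y‖ ^ 2 / 2) ^ ((β - α) / β)
      ≤ Real.exp (α * f ((β / α) • ((α / β) • x + ((β - α) / β) • y))) := by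
  intro x y
  have hβ : 0 < β := hα.trans_le hαβ
  have hz : (β / α) • ((α / β) • x + ((β - α) / β) • y) = x - -((β - α) / α) • y := by
    rw [smul_add, smul_smul, smul_smul, neg_smul, sub_neg_eq_add]
    congr 1
    · rw [div_mul_div_cancel₀ hα.ne', div_self hβ.ne', one_smul]
    · congr 1
      field_simp
  have hv : ‖-((β - α) / α) • y‖ ^ 2 = ((β - α) / α) ^ 2 * ‖y‖ ^ 2 := by
    rw [norm_smul, mul_pow, Real.norm_eq_abs, sq_abs, neg_sq]
  have hQ := Q_le_add_norm_sq_div hh (by omega) (hbd x) (-((β - α) / α) • y)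
  rw [hv] at hQ
  rw [← Real.exp_mul, ← Real.exp_mul, ← Real.exp_add, Real.exp_le_exp, hz]
  have hlhs : β * Q h f n x * (α / β) +
        -(β * (β - α) / (α * (n * h))) * ‖y‖ ^ 2 / 2 * ((β - α) / β) =
      α * (Q h f n x - ((β - α) / α) ^ 2 * ‖y‖ ^ 2 / (2 * (n * h))) := by
    field_simp
    ring
  rw [hlhs]
  exact mul_le_mul_of_nonneg_left (by linarith) hα.le
end
end

section
/- Ultracontractive bound: ‖e^{Q_n f}‖_∞ ≤ ‖e^f‖_1 · (nh)^{−N/2} · (2π)^{−N/2}, with equality attainable when f(x) = −b|x − x̄|²/2 and nh = 1/b. -/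
/-!
Moving from `x` to `y` with the constant velocity `q_k = (x - y) / (n h)` shows
`Q_n f (x) ≤ f (y) + |y - x|² / (2 n h)`. Hence `e^{Q_n f (x)}` times the Gaussian kernel of
variance `n h` centred at `x` is dominated by `e^f`, and integrating in `y` gives the bound.

For `f = -b |· - x̄|² / 2` with `n h = 1 / b`, Cauchy–Schwarz `|∑ q_k|² ≤ n ∑ |q_k|²` makes every
cost at `x̄` nonnegative, so `Q_n f (x̄) = 0 = max f`; as `Q_n f ≤ 0` everywhere, the supremum of
`e^{Q_n f}` is `1`, which is exactly the Gaussian integral times `(2π n h)^{-N/2}`.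
-/

open MeasureTheory
open scoped BigOperators Real

noncomputable section

section Gaussian

variable {V : Type*} [NormedAddCommGroup V] [InnerProductSpace ℝ V] [FiniteDimensional ℝ V]
  [MeasurableSpace V] [BorelSpace V]

theorem integral_exp_neg_norm_sub_sq_div {t : ℝ} (ht : 0 < t) (x : V) :
    ∫ y : V, Real.exp (-‖y - x‖ ^ 2 / (2 * t))
      = (2 * π * t) ^ (Module.finrank ℝ V / 2 : ℝ) := by
  have hc : 0 < (2 * t)⁻¹ := by positivity
  calc ∫ y : V, Real.exp (-‖y - x‖ ^ 2 / (2 * t))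
      = ∫ y : V, Real.exp (-(2 * t)⁻¹ * ‖y - x‖ ^ 2) := by
        congr 1 with y; ring_nf
    _ = (π / (2 * t)⁻¹) ^ (Module.finrank ℝ V / 2 : ℝ) := by
        rw [integral_sub_right_eq_self (fun v => Real.exp (-(2 * t)⁻¹ * ‖v‖ ^ 2)),
          GaussianFourier.integral_rexp_neg_mul_sq_norm hc]
    _ = (2 * π * t) ^ (Module.finrank ℝ V / 2 : ℝ) := by
        rw [div_inv_eq_mul]; ring_nf

theorem integrable_exp_neg_norm_sub_sq_div {t : ℝ} (ht : 0 < t) (x : V) :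
    Integrable fun y : V => Real.exp (-‖y - x‖ ^ 2 / (2 * t)) :=
  Integrable.of_integral_ne_zero <| by
    rw [integral_exp_neg_norm_sub_sq_div ht x]; positivity

end Gaussian

theorem norm_sum_sq_le_card_mul_sum_norm_sq {ι E : Type*} [SeminormedAddCommGroup E]
    (s : Finset ι) (q : ι → E) :
    ‖∑ i ∈ s, q i‖ ^ 2 ≤ s.card * ∑ i ∈ s, ‖q i‖ ^ 2 :=
  calc ‖∑ i ∈ s, q i‖ ^ 2 ≤ (∑ i ∈ s, ‖q i‖) ^ 2 := by
        gcongr; exact norm_sum_le s q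
    _ ≤ s.card * ∑ i ∈ s, ‖q i‖ ^ 2 := sq_sum_le_card_mul_sum_sq

theorem rpow_neg_mul_rpow_neg {a c : ℝ} (ha : 0 ≤ a) (hc : 0 ≤ c) (s : ℝ) :
    a ^ (-s) * c ^ (-s) = ((c * a) ^ s)⁻¹ := by
  rw [← Real.mul_rpow ha hc, Real.rpow_neg (by positivity), mul_comm]

section SemiLagrangian

variable {N n : ℕ} {h : ℝ} {f : EuclideanSpace ℝ (Fin N) → ℝ}

theorem Q_le_add_norm_sub_sq_div {x : EuclideanSpace ℝ (Fin N)}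
    (hbdd : BddBelow (Set.range fun q : Fin n → EuclideanSpace ℝ (Fin N) =>
      f (x - h • ∑ k, q k) + h * ∑ k, ‖q k‖ ^ 2 / 2))
    (hnh : (n : ℝ) * h ≠ 0) (y : EuclideanSpace ℝ (Fin N)) :
    Q h f n x ≤ f y + ‖y - x‖ ^ 2 / (2 * (n * h)) := by
  set v : EuclideanSpace ℝ (Fin N) := ((n : ℝ) * h)⁻¹ • (x - y)
  have hpoint : x - h • ∑ _k : Fin n, v = y := by
    rw [Finset.sum_const, Finset.card_univ, Fintype.card_fin, ← Nat.cast_smul_eq_nsmul ℝ,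
      smul_smul, smul_smul, mul_comm h, mul_inv_cancel₀ hnh, one_smul, sub_sub_cancel]
  have hcost : h * ∑ _k : Fin n, ‖v‖ ^ 2 / 2 = ‖y - x‖ ^ 2 / (2 * (n * h)) := by
    rw [Finset.sum_const, Finset.card_univ, Fintype.card_fin, nsmul_eq_mul, norm_smul,
      norm_sub_rev, mul_pow, norm_inv, Real.norm_eq_abs, inv_pow, sq_abs]
    field_simp
  have := ciInf_le hbdd fun _ => v
  rwa [hpoint, hcost] at this

theorem exp_Q_mul_rpow_le_integral (hf : Integrable fun y => Real.exp (f y))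
    {x : EuclideanSpace ℝ (Fin N)}
    (hbdd : BddBelow (Set.range fun q : Fin n → EuclideanSpace ℝ (Fin N) =>
      f (x - h • ∑ k, q k) + h * ∑ k, ‖q k‖ ^ 2 / 2))
    (hnh : 0 < (n : ℝ) * h) :
    Real.exp (Q h f n x) * (2 * π * (n * h)) ^ ((N : ℝ) / 2) ≤ ∫ y, Real.exp (f y) := by
  have hgauss := integral_exp_neg_norm_sub_sq_div hnh x
  rw [finrank_euclideanSpace_fin] at hgauss
  calc Real.exp (Q h f n x) * (2 * π * (n * h)) ^ ((N : ℝ) / 2)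
      = ∫ y, Real.exp (Q h f n x) * Real.exp (-‖y - x‖ ^ 2 / (2 * (n * h))) := by
        rw [integral_const_mul, hgauss]
    _ ≤ ∫ y, Real.exp (f y) := by
        refine integral_mono ((integrable_exp_neg_norm_sub_sq_div hnh x).const_mul _) hf
          fun y => ?_
        rw [← Real.exp_add, Real.exp_le_exp, neg_div]
        linarith [Q_le_add_norm_sub_sq_div hbdd hnh.ne' y]

/-- When the infimum defining `Q` is unbounded below (the genuine value is `-∞`), Lean's `⨅` is the
junk value `0`, so `0` is also the right bound in that case. -/
theorem Q_nonpos {x : EuclideanSpace ℝ (Fin N)} (hfx : f x ≤ 0) : Q h f n x ≤ 0 :=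
  Real.iInf_nonpos' ⟨0, by simpa using hfx⟩

theorem Q_neg_mul_norm_sub_sq_self {b : ℝ} (hb : 0 < b) (hnh : (n : ℝ) * h = 1 / b)
    (xbar : EuclideanSpace ℝ (Fin N)) :
    Q h (fun y => -b * ‖y - xbar‖ ^ 2 / 2) n xbar = 0 := by
  have hcost_ge : ∀ q : Fin n → EuclideanSpace ℝ (Fin N),
      0 ≤ -b * ‖xbar - h • ∑ k, q k - xbar‖ ^ 2 / 2 + h * ∑ k, ‖q k‖ ^ 2 / 2 := by
    intro q
    have hcs := norm_sum_sq_le_card_mul_sum_norm_sq Finset.univ q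
    rw [Finset.card_univ, Fintype.card_fin] at hcs
    have hbnh : b * (n * h) = 1 := by rw [hnh]; field_simp
    rw [sub_sub_cancel_left, norm_neg, norm_smul, Real.norm_eq_abs, mul_pow, sq_abs,
      ← Finset.sum_div]
    have hbalance : b * h ^ 2 * (n * ∑ k, ‖q k‖ ^ 2) = h * ∑ k, ‖q k‖ ^ 2 := by
      linear_combination (h * ∑ k, ‖q k‖ ^ 2) * hbnh
    linarith [mul_le_mul_of_nonneg_left hcs (by positivity : 0 ≤ b * h ^ 2)]
  refine le_antisymm ?_ (le_ciInf hcost_ge)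
  exact (ciInf_le ⟨0, Set.forall_mem_range.2 hcost_ge⟩ fun _ => 0).trans_eq (by simp)

theorem iSup_exp_Q_neg_mul_norm_sub_sq {b : ℝ} (hb : 0 < b) (hnh : (n : ℝ) * h = 1 / b)
    (xbar : EuclideanSpace ℝ (Fin N)) :
    ⨆ x, Real.exp (Q h (fun y => -b * ‖y - xbar‖ ^ 2 / 2) n x) = 1 := by
  have hle : ∀ x, Real.exp (Q h (fun y => -b * ‖y - xbar‖ ^ 2 / 2) n x) ≤ 1 := fun x =>
    Real.exp_le_one_iff.2 <| Q_nonpos <| by nlinarith [sq_nonneg ‖x - xbar‖]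
  refine le_antisymm (ciSup_le hle) ?_
  refine le_ciSup_of_le ⟨1, Set.forall_mem_range.2 hle⟩ xbar ?_
  rw [Q_neg_mul_norm_sub_sq_self hb hnh, Real.exp_zero]

end SemiLagrangian

/-- Ultracontractive bound: `‖e^{Q_n f}‖_∞ ≤ ‖e^f‖_1 (nh)^{-N/2} (2π)^{-N/2}`, with
equality when `f(x) = -b|x - xbar|²/2` and `nh = 1/b`. -/
theorem ultracontractive_bound {N : ℕ} (h : ℝ) (hh : 0 < h) (n : ℕ) (hn : 1 ≤ n) :
    (∀ f : EuclideanSpace ℝ (Fin N) → ℝ,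
      Integrable (fun x => Real.exp (f x)) volume →
      (∀ x : EuclideanSpace ℝ (Fin N),
        BddBelow (Set.range fun q : Fin n → EuclideanSpace ℝ (Fin N) =>
          f (x - h • ∑ k, q k) + h * ∑ k, ‖q k‖ ^ 2 / 2)) →
      ∀ x : EuclideanSpace ℝ (Fin N),
        Real.exp (Q h f n x)
          ≤ (∫ y, Real.exp (f y)) * ((n : ℝ) * h) ^ (-(N : ℝ) / 2) *
              (2 * π) ^ (-(N : ℝ) / 2)) ∧
    (∀ (b : ℝ), 0 < b → ∀ xbar : EuclideanSpace ℝ (Fin N), (n : ℝ) * h = 1 / b →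
      (⨆ x : EuclideanSpace ℝ (Fin N),
          Real.exp (Q h (fun y => -b * ‖y - xbar‖ ^ 2 / 2) n x))
        = (∫ y : EuclideanSpace ℝ (Fin N), Real.exp (-b * ‖y - xbar‖ ^ 2 / 2)) *
            ((n : ℝ) * h) ^ (-(N : ℝ) / 2) * (2 * π) ^ (-(N : ℝ) / 2)) := by
  have hnh : 0 < (n : ℝ) * h := mul_pos (by exact_mod_cast hn) hh
  have hscale : ((n : ℝ) * h) ^ (-(N : ℝ) / 2) * (2 * π) ^ (-(N : ℝ) / 2)
      = ((2 * π * (n * h)) ^ ((N : ℝ) / 2))⁻¹ := by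
    rw [neg_div, rpow_neg_mul_rpow_neg hnh.le (by positivity)]
  have hvol : 0 < (2 * π * (n * h)) ^ ((N : ℝ) / 2) := by positivity
  refine ⟨fun f hf hbdd x => ?_, fun b hb xbar hbnh => ?_⟩
  · rw [mul_assoc, hscale, ← div_eq_mul_inv, le_div_iff₀ hvol]
    exact exp_Q_mul_rpow_le_integral hf (hbdd x) hnh
  · have hgauss := integral_exp_neg_norm_sub_sq_div hnh xbar
    rw [finrank_euclideanSpace_fin] at hgauss
    have hintegrand : (fun y : EuclideanSpace ℝ (Fin N) => Real.exp (-b * ‖y - xbar‖ ^ 2 / 2))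
        = fun y => Real.exp (-‖y - xbar‖ ^ 2 / (2 * (n * h))) := by
      rw [hbnh]; field_simp
    rw [iSup_exp_Q_neg_mul_norm_sub_sq hb hbnh, mul_assoc, hscale, hintegrand, hgauss,
      mul_inv_cancel₀ hvol.ne']
end
end
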